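/- In the non-completeness counterexample RCM M, for every skeleton σ ∈ Σ_S and every base b ∈ σ(E_1), if P.X|_b = {i_x}, Q.Y|_b = {i_y}, and S′.Z|_b = {i_z} are all nonempty, then the ground graph GG_{Mσ} does NOT simultaneously contain both edges i_x.X → i_y.Y and i_z.Z → i_y.Y; consequently there is no skeleton and base in which P.X|_b and S′.Z|_b are d-connected given Q.Y|_b in GG_{Mσ}. -/
import Mathlib


/-- Kinds of item classes in a relational schema. -/
inductive ItemKind | entity | relationship
deriving DecidableEq

/-- Cardinalities. -/
inductive Card | one | many
deriving DecidableEq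

/-- A relational schema: item classes with kinds, participation of entity
classes in relationship classes, and a cardinality function `card R E`. -/
structure Schema where
  Class : Type
  kind : Class → ItemKind
  participates : Class → Class → Prop   -- `participates E R`
  card : Class → Class → Card           -- `card R E`

namespace Schema

/-- Condition (1) of relational paths: alternation between entity and
relationship classes, with participation at each consecutive pair. -/
def Alternates (S : Schema) (P : List S.Class) : Prop :=
  ∀ i a b, P[i]? = some a → P[i+1]? = some b →
    ((S.kind a = .entity ∧ S.kind b = .relationship ∧ S.participates a b) ∨
     (S.kind a = .relationship ∧ S.kind b = .entity ∧ S.participates b a))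

/-- Condition (2): in every subsequence `[E, R, E']`, `E ≠ E'`. -/
def NoERE (S : Schema) (P : List S.Class) : Prop :=
  ∀ i a b c, P[i]? = some a → P[i+1]? = some b → P[i+2]? = some c →
    S.kind a = .entity → a ≠ c

/-- Condition (3): in every subsequence `[R, E, R']` with `R = R'`,
`card (R, E) = many`. -/
def CardMany (S : Schema) (P : List S.Class) : Prop :=
  ∀ i a b c, P[i]? = some a → P[i+1]? = some b → P[i+2]? = some c →
    S.kind a = .relationship → a = c → S.card a b = .many

/-- A valid relational path. -/
def ValidPath (S : Schema) (P : List S.Class) : Prop :=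
  P ≠ [] ∧ S.Alternates P ∧ S.NoERE P ∧ S.CardMany P

end Schema

/-- A relational skeleton instantiating a schema: items with classes and a
symmetric adjacency relation, respecting participation and cardinality
constraints (`card = one` forces at most one adjacent relationship instance;
relationship instances have exactly one adjacent entity instance per
participating entity class). -/
structure Skeleton (S : Schema) where
  Item : Type
  classOf : Item → S.Class
  adj : Item → Item → Prop
  adj_symm : ∀ {i j}, adj i j → adj j i
  adj_alt : ∀ {i j}, adj i j →
    (S.kind (classOf i) = .entity ∧ S.kind (classOf j) = .relationship ∧
      S.participates (classOf i) (classOf j)) ∨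
    (S.kind (classOf i) = .relationship ∧ S.kind (classOf j) = .entity ∧
      S.participates (classOf j) (classOf i))
  card_one : ∀ {e r r'}, S.kind (classOf e) = .entity →
    S.card (classOf r) (classOf e) = .one → classOf r = classOf r' →
    adj e r → adj e r' → r = r'
  rel_unique : ∀ {r i j}, S.kind (classOf r) = .relationship →
    adj r i → adj r j → classOf i = classOf j → i = j
  rel_total : ∀ {r E}, S.kind (classOf r) = .relationship →
    S.participates E (classOf r) → ∃ e, classOf e = E ∧ adj r e

namespace Skeleton

variable {S : Schema} (σ : Skeleton S)

/-- Auxiliary recursion for terminal sets under bridge burning semantics: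
`(tsetAux P b ℓ).1` is the terminal set `P^{1:ℓ+1}|_b` (0-indexed `ℓ`) and
`(tsetAux P b ℓ).2` is the set of all items visited up to step `ℓ`. -/
def tsetAux (P : List S.Class) (b : σ.Item) : ℕ → Set σ.Item × Set σ.Item
  | 0 => ({b}, {b})
  | ℓ+1 =>
      let prev := tsetAux P b ℓ
      let cur : Set σ.Item :=
        {i | P[ℓ+1]? = some (σ.classOf i) ∧ (∃ j ∈ prev.1, σ.adj i j) ∧
             i ∉ prev.2}
      (cur, prev.2 ∪ cur)

/-- The terminal set `P^{1:ℓ+1}|_b` (so `ℓ` is 0-indexed: `tset P b 0 = {b}`). -/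
def tset (P : List S.Class) (b : σ.Item) (ℓ : ℕ) : Set σ.Item :=
  (σ.tsetAux P b ℓ).1

/-- The (full) terminal set `P|_b`. -/
def tfull (P : List S.Class) (b : σ.Item) : Set σ.Item :=
  σ.tset P b (P.length - 1)

end Skeleton

/-- Item classes of the non-completeness counterexample schema. -/
inductive C13 | E1 | E2 | E3 | E4 | E5 | R1 | R2 | R3
deriving DecidableEq

open C13 in
/-- The non-completeness counterexample schema: `R1=⟨E1,E2,E4⟩`,
`R2=⟨E2,E3⟩`, `R3=⟨E3,E4,E5⟩`, with all cardinalities `one`. -/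
def S13 : Schema where
  Class := C13
  kind := fun c => match c with
    | R1 | R2 | R3 => .relationship
    | _ => .entity
  participates := fun e r =>
    (e, r) ∈ ([(E1,R1),(E2,R1),(E4,R1),(E2,R2),(E3,R2),
               (E3,R3),(E4,R3),(E5,R3)] : List (C13 × C13))
  card := fun _ _ => .one

open C13 in
def P13 : List C13 := [E1,R1,E2,R2,E3]
open C13 in
def Q13 : List C13 := [E1,R1,E4,R3,E3,R2,E2]
open C13 in
def S14 : List C13 := [E1,R1,E4,R3,E5]
open C13 in
def Sp13 : List C13 := [E1,R1,E2,R2,E3,R3,E5]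
open C13 in
def D1 : List C13 := [E2,R2,E3,R3,E4,R1,E2,R2,E3]
open C13 in
def D2 : List C13 := [E2,R2,E3,R3,E5]


section Helpers
variable {S : Schema} (σ : Skeleton S)

lemma tstep {P : List S.Class} {b i : σ.Item} {ℓ : ℕ}
    (h : i ∈ σ.tset P b (ℓ+1)) :
    P[ℓ+1]? = some (σ.classOf i) ∧ (∃ j ∈ σ.tset P b ℓ, σ.adj i j) ∧
      i ∉ (σ.tsetAux P b ℓ).2 := h

lemma tzero {P : List S.Class} {b i : σ.Item} (h : i ∈ σ.tset P b 0) : i = b := h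

lemma tset_sub_vis (P : List S.Class) (b : σ.Item) :
    ∀ ℓ, σ.tset P b ℓ ⊆ (σ.tsetAux P b ℓ).2
  | 0 => fun _ h => h
  | (_+1) => fun _ h => Set.mem_union_right _ h

lemma vis_mono (P : List S.Class) (b : σ.Item) {ℓ m : ℕ} (h : ℓ ≤ m) :
    (σ.tsetAux P b ℓ).2 ⊆ (σ.tsetAux P b m).2 := by
  induction h with
  | refl => exact subset_rfl
  | step _ ih => exact ih.trans Set.subset_union_left

end Helpers

lemma uniqR {σ : Skeleton S13} {e r r' : σ.Item}
    (he : S13.kind (σ.classOf e) = .entity)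
    (hc : σ.classOf r = σ.classOf r') (h1 : σ.adj e r) (h2 : σ.adj e r') :
    r = r' :=
  σ.card_one he rfl hc h1 h2

lemma uniqE {σ : Skeleton S13} {r i j : σ.Item}
    (hr : S13.kind (σ.classOf r) = .relationship)
    (h1 : σ.adj r i) (h2 : σ.adj r j) (hc : σ.classOf i = σ.classOf j) :
    i = j :=
  σ.rel_unique hr h1 h2 hc
/-- in the non-completeness counterexample RCM, for every
skeleton and base `b` of class `E1`, if `P.X|_b = {i_x}`, `Q.Y|_b = {i_y}`
and `S′.Z|_b = {i_z}`, then the ground graph cannot simultaneously contain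
both edges `i_x.X → i_y.Y` (i.e. `i_x ∈ D_1|_{i_y}`) and `i_z.Z → i_y.Y`
(i.e. `i_z ∈ D_2|_{i_y}`); since `X` and `Z` connect only through the
collider `Y`, no skeleton and base `d`-connect `P.X|_b` and `S′.Z|_b` given
`Q.Y|_b`. -/
theorem no_collider_structure :
    ∀ (σ : Skeleton S13) (b : σ.Item), σ.classOf b = C13.E1 →
      ∀ ix iy iz : σ.Item, σ.tfull P13 b = {ix} → σ.tfull Q13 b = {iy} →
        σ.tfull Sp13 b = {iz} →
        ¬ (ix ∈ σ.tfull D1 iy ∧ iz ∈ σ.tfull D2 iy) := by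
  intro σ b hb ix iy iz hP hQ hS
  rintro ⟨hD1m, hD2m⟩
  -- memberships
  have hxm : ix ∈ σ.tset P13 b 4 := by
    have : ix ∈ σ.tfull P13 b := by rw [hP]; exact rfl
    exact this
  have hym : iy ∈ σ.tset Q13 b 6 := by
    have : iy ∈ σ.tfull Q13 b := by rw [hQ]; exact rfl
    exact this
  have hzm : iz ∈ σ.tset Sp13 b 6 := by
    have : iz ∈ σ.tfull Sp13 b := by rw [hS]; exact rfl
    exact this
  have hD1m' : ix ∈ σ.tset D1 iy 8 := hD1m
  have hD2m' : iz ∈ σ.tset D2 iy 4 := hD2m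
  -- P chain: b — r1 — e2 — r2 — ix
  obtain ⟨p4, ⟨r2, hr2m, aXr2⟩, -⟩ := tstep σ hxm
  obtain ⟨p3, ⟨e2, he2m, aR2E2⟩, -⟩ := tstep σ hr2m
  obtain ⟨p2, ⟨r1, hr1m, aE2R1⟩, -⟩ := tstep σ he2m
  obtain ⟨p1, ⟨b0, hb0m, aR1b⟩, -⟩ := tstep σ hr1m
  obtain rfl : b = b0 := (tzero σ hb0m).symm
  -- Q chain: b — s1 — f4 — s3 — f3 — s2 — iy
  obtain ⟨q6, ⟨s2, hs2m, aYs2⟩, -⟩ := tstep σ hym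
  obtain ⟨q5, ⟨f3, hf3m, aS2F3⟩, -⟩ := tstep σ hs2m
  obtain ⟨q4, ⟨s3, hs3m, aF3S3⟩, -⟩ := tstep σ hf3m
  obtain ⟨q3, ⟨f4, hf4m, aS3F4⟩, -⟩ := tstep σ hs3m
  obtain ⟨q2, ⟨s1, hs1m, aF4S1⟩, -⟩ := tstep σ hf4m
  obtain ⟨q1, ⟨b1, hb1m, aS1b⟩, -⟩ := tstep σ hs1m
  obtain rfl : b = b1 := (tzero σ hb1m).symm
  -- Sp chain: b — t1 — g2 — t2 — g3 — t3 — iz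
  obtain ⟨z6, ⟨t3, ht3m, aZt3⟩, -⟩ := tstep σ hzm
  obtain ⟨z5, ⟨g3, hg3m, aT3G3⟩, -⟩ := tstep σ ht3m
  obtain ⟨z4, ⟨t2, ht2m, aG3T2⟩, -⟩ := tstep σ hg3m
  obtain ⟨z3, ⟨g2, hg2m, aT2G2⟩, -⟩ := tstep σ ht2m
  obtain ⟨z2, ⟨t1, ht1m, aG2T1⟩, -⟩ := tstep σ hg2m
  obtain ⟨z1, ⟨b2, hb2m, aT1b⟩, -⟩ := tstep σ ht1m
  obtain rfl : b = b2 := (tzero σ hb2m).symm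
  -- D1 chain from iy (only burning + levels ≤ 2 matter)
  obtain ⟨d8, ⟨w7, hw7m, -⟩, hburn⟩ := tstep σ hD1m'
  obtain ⟨-, ⟨w6, hw6m, -⟩, -⟩ := tstep σ hw7m
  obtain ⟨-, ⟨w5, hw5m, -⟩, -⟩ := tstep σ hw6m
  obtain ⟨-, ⟨w4, hw4m, -⟩, -⟩ := tstep σ hw5m
  obtain ⟨-, ⟨w3, hw3m, -⟩, -⟩ := tstep σ hw4m
  obtain ⟨-, ⟨h3, hh3m, -⟩, -⟩ := tstep σ hw3m
  obtain ⟨d2, ⟨u1, hu1m, aH3U1⟩, -⟩ := tstep σ hh3m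
  obtain ⟨d1, ⟨y0, hy0m, aU1Y⟩, -⟩ := tstep σ hu1m
  obtain rfl : iy = y0 := (tzero σ hy0m).symm
  -- D2 chain from iy: iy — v1 — k3 — v2 — iz
  obtain ⟨e4, ⟨v2, hv2m, aZv2⟩, -⟩ := tstep σ hD2m'
  obtain ⟨e3, ⟨k3, hk3m, aV2K3⟩, -⟩ := tstep σ hv2m
  obtain ⟨e2', ⟨v1, hv1m, aK3V1⟩, -⟩ := tstep σ hk3m
  obtain ⟨e1', ⟨y1, hy1m, aV1Y⟩, -⟩ := tstep σ hv1m
  obtain rfl : iy = y1 := (tzero σ hy1m).symm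
  -- class facts
  have cX : σ.classOf ix = C13.E3 :=
    Option.some.inj (show some (σ.classOf ix) = some C13.E3 from p4.symm)
  have cR2 : σ.classOf r2 = C13.R2 :=
    Option.some.inj (show some (σ.classOf r2) = some C13.R2 from p3.symm)
  have cE2 : σ.classOf e2 = C13.E2 :=
    Option.some.inj (show some (σ.classOf e2) = some C13.E2 from p2.symm)
  have cR1 : σ.classOf r1 = C13.R1 :=
    Option.some.inj (show some (σ.classOf r1) = some C13.R1 from p1.symm)
  have cY : σ.classOf iy = C13.E2 :=
    Option.some.inj (show some (σ.classOf iy) = some C13.E2 from q6.symm)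
  have cS2 : σ.classOf s2 = C13.R2 :=
    Option.some.inj (show some (σ.classOf s2) = some C13.R2 from q5.symm)
  have cF3 : σ.classOf f3 = C13.E3 :=
    Option.some.inj (show some (σ.classOf f3) = some C13.E3 from q4.symm)
  have cS3 : σ.classOf s3 = C13.R3 :=
    Option.some.inj (show some (σ.classOf s3) = some C13.R3 from q3.symm)
  have cT3 : σ.classOf t3 = C13.R3 :=
    Option.some.inj (show some (σ.classOf t3) = some C13.R3 from z5.symm)
  have cG3 : σ.classOf g3 = C13.E3 :=
    Option.some.inj (show some (σ.classOf g3) = some C13.E3 from z4.symm)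
  have cT2 : σ.classOf t2 = C13.R2 :=
    Option.some.inj (show some (σ.classOf t2) = some C13.R2 from z3.symm)
  have cG2 : σ.classOf g2 = C13.E2 :=
    Option.some.inj (show some (σ.classOf g2) = some C13.E2 from z2.symm)
  have cT1 : σ.classOf t1 = C13.R1 :=
    Option.some.inj (show some (σ.classOf t1) = some C13.R1 from z1.symm)
  have cH3 : σ.classOf h3 = C13.E3 :=
    Option.some.inj (show some (σ.classOf h3) = some C13.E3 from d2.symm)
  have cU1 : σ.classOf u1 = C13.R2 :=
    Option.some.inj (show some (σ.classOf u1) = some C13.R2 from d1.symm)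
  have cK3 : σ.classOf k3 = C13.E3 :=
    Option.some.inj (show some (σ.classOf k3) = some C13.E3 from e2'.symm)
  have cV1 : σ.classOf v1 = C13.R2 :=
    Option.some.inj (show some (σ.classOf v1) = some C13.R2 from e1'.symm)
  have cV2 : σ.classOf v2 = C13.R3 :=
    Option.some.inj (show some (σ.classOf v2) = some C13.R3 from e3.symm)
  have cZ : σ.classOf iz = C13.E5 :=
    Option.some.inj (show some (σ.classOf iz) = some C13.E5 from z6.symm)
  clear p4 p3 p2 p1 q6 q5 q4 q3 q2 q1 z6 z5 z4 z3 z2 z1 d8 d2 d1 e4 e3 e2' e1'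
  -- burning: ix ≠ h3
  have hne : ix ≠ h3 := by
    intro e
    exact hburn (by
      rw [e]
      exact vis_mono σ D1 iy (by norm_num) (tset_sub_vis σ D1 iy 2 hh3m))
  -- identifications
  obtain rfl : t1 = r1 :=
    uniqR (by rw [hb]; rfl) (cT1.trans cR1.symm) (σ.adj_symm aT1b) (σ.adj_symm aR1b)
  obtain rfl : g2 = e2 :=
    uniqE (by rw [cT1]; rfl) (σ.adj_symm aG2T1) (σ.adj_symm aE2R1) (cG2.trans cE2.symm)
  obtain rfl : t2 = r2 :=
    uniqR (by rw [cG2]; rfl) (cT2.trans cR2.symm) (σ.adj_symm aT2G2) (σ.adj_symm aR2E2)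
  obtain rfl : g3 = ix :=
    uniqE (by rw [cT2]; rfl) (σ.adj_symm aG3T2) (σ.adj_symm aXr2) (cG3.trans cX.symm)
  obtain rfl : u1 = s2 :=
    uniqR (by rw [cY]; rfl) (cU1.trans cS2.symm) (σ.adj_symm aU1Y) aYs2
  obtain rfl : v1 = u1 :=
    uniqR (by rw [cY]; rfl) (cV1.trans cU1.symm) (σ.adj_symm aV1Y) (σ.adj_symm aU1Y)
  obtain rfl : h3 = f3 :=
    uniqE (by rw [cU1]; rfl) (σ.adj_symm aH3U1) aS2F3 (cH3.trans cF3.symm)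
  obtain rfl : k3 = h3 :=
    uniqE (by rw [cU1]; rfl) (σ.adj_symm aK3V1) (σ.adj_symm aH3U1) (cK3.trans cH3.symm)
  obtain rfl : v2 = s3 :=
    uniqR (by rw [cK3]; rfl) (cV2.trans cS3.symm) (σ.adj_symm aV2K3) aF3S3
  obtain rfl : t3 = v2 :=
    uniqR (by rw [cZ]; rfl) (cT3.trans cV2.symm) aZt3 aZv2
  exact hne (uniqE (by rw [cT3]; rfl) aT3G3 (σ.adj_symm aF3S3)
    (cX.trans cK3.symm))
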